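/- arXiv:math/0608440 — 4 statements merged into one kernel-verified Lean document; each statement's English description precedes it below -/
import Mathlib

section
/- Let 0 < β ≤ α < π and let θ ∈ ℝ satisfy α − β < θ < α + β and θ < 2π − α − β. Then the series ∑_{m=1}^{∞} sin(mα) sin(mβ) sin(mθ)/m converges and its sum equals π/4. -/
/-!
Since `4 sin a sin b sin c = sin (a + b - c) + sin (b + c - a) + sin (c + a - b) - sin (a + b + c)`,
the series splits into four sawtooth series `∑ sin (m x) / m`, and the hypotheses put all four
angles `x` in `(0, 2π)`, where the sawtooth series sums to `(π - x) / 2`; the four values add up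
to `π`.

The sawtooth series converges by Dirichlet's test, the partial sums of `sin (m x)` being bounded
by `1 / sin (x / 2)`. Its sum is identified by Abel's theorem: for `|r| < 1` the power series
`∑ sin (m x) r ^ m / m` is `Im (-log (1 - r e^{ix}))`, which is continuous at `r = 1` with value
`-arg (1 - e^{ix}) = (π - x) / 2`.
-/

open scoped Real
open Filter Finset Topology

theorem sum_Icc_one_eq_sum_range_succ {M : Type*} [AddCommMonoid M] {f : ℕ → M} (hf : f 0 = 0)
    (n : ℕ) : ∑ m ∈ Icc 1 n, f m = ∑ m ∈ range (n + 1), f m := by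
  rw [range_eq_Ico, sum_eq_sum_Ico_succ_bot n.succ_pos, hf, zero_add]
  rfl

namespace Real

theorem two_mul_sin_half_mul_sum_range_sin (x : ℝ) (n : ℕ) :
    2 * sin (x / 2) * ∑ i ∈ range n, sin ((i + 1) * x) =
      cos (x / 2) - cos ((n + 1 / 2) * x) := by
  have h := sum_range_sub' (fun i : ℕ => cos ((i + 1 / 2) * x)) n
  rw [Nat.cast_zero, zero_add, one_div_mul_eq_div] at h
  rw [← h, mul_sum]
  refine sum_congr rfl fun i _ => ?_
  rw [cos_sub_cos, show ((i + 1 / 2) * x + ((i + 1 : ℕ) + 1 / 2) * x) / 2 = (i + 1) * x by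
      push_cast; ring,
    show ((i + 1 / 2) * x - ((i + 1 : ℕ) + 1 / 2) * x) / 2 = -(x / 2) by push_cast; ring, sin_neg]
  ring

theorem abs_sum_range_sin_le {x : ℝ} (hx : 0 < sin (x / 2)) (n : ℕ) :
    |∑ i ∈ range n, sin ((i + 1) * x)| ≤ 1 / sin (x / 2) := by
  have h : |2 * sin (x / 2) * ∑ i ∈ range n, sin ((i + 1) * x)| ≤ 2 := by
    rw [two_mul_sin_half_mul_sum_range_sin]
    exact (abs_sub _ _).trans
      (by linarith [abs_cos_le_one (x / 2), abs_cos_le_one ((n + 1 / 2) * x)])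
  rw [abs_mul, abs_of_pos (by positivity)] at h
  rw [le_div_iff₀ hx]
  linarith

theorem cauchySeq_sum_range_sin_mul_div {x : ℝ} (hx : 0 < sin (x / 2)) :
    CauchySeq fun n => ∑ i ∈ range n, sin (i * x) / i := by
  rw [← cauchySeq_shift 1]
  have dirichlet := Antitone.cauchySeq_series_mul_of_tendsto_zero_of_bounded
    (fun a b hab => one_div_le_one_div_of_le (by positivity) (by gcongr))
    tendsto_one_div_add_atTop_nhds_zero_nat
    fun n => (norm_eq_abs _).trans_le (abs_sum_range_sin_le hx n)
  convert dirichlet using 2 with n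
  rw [sum_range_succ']
  simp [div_eq_inv_mul]

end Real

namespace Complex

theorem one_sub_exp_mul_I (x : ℝ) :
    1 - exp (x * I) = (2 * Real.sin (x / 2) : ℝ) * exp ((x - π) / 2 * I) := by
  have hexp : exp ((x - π) / 2 * I) = -I * exp (x / 2 * I) := by
    rw [show (x - π) / 2 * I = x / 2 * I - π / 2 * I by ring, exp_sub, exp_pi_div_two_mul_I,
      div_I]
    ring
  have h1 : exp (-(x / 2) * I) * exp (x / 2 * I) = 1 := by rw [← exp_add]; simp
  have h2 : exp (x / 2 * I) * exp (x / 2 * I) = exp (x * I) := by rw [← exp_add]; ring_nf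
  push_cast
  rw [hexp, sin]
  linear_combination (exp (-(x / 2) * I) * exp (x / 2 * I) - exp (x / 2 * I) * exp (x / 2 * I)) *
    I_sq - h1 + h2

theorem arg_one_sub_exp_mul_I {x : ℝ} (hx0 : 0 < x) (hx2 : x < 2 * π) :
    arg (1 - exp (x * I)) = (x - π) / 2 := by
  have hs : 0 < Real.sin (x / 2) := Real.sin_pos_of_pos_of_lt_pi (by linarith) (by linarith)
  rw [one_sub_exp_mul_I, arg_real_mul _ (by positivity), ← ofReal_ofNat, ← ofReal_sub,
    ← ofReal_div, arg_exp_mul_I, toIocMod_eq_self]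
  constructor <;> linarith [Real.pi_pos]

theorem one_sub_exp_mul_I_mem_slitPlane {x : ℝ} (hx0 : 0 < x) (hx2 : x < 2 * π) :
    1 - exp (x * I) ∈ slitPlane := by
  have hs : 0 < Real.sin (x / 2) := Real.sin_pos_of_pos_of_lt_pi (by linarith) (by linarith)
  refine mem_slitPlane_iff_arg.mpr ⟨?_, ?_⟩
  · rw [arg_one_sub_exp_mul_I hx0 hx2]
    linarith [Real.pi_pos]
  · rw [one_sub_exp_mul_I]
    exact mul_ne_zero (ofReal_ne_zero.mpr (by positivity)) (exp_ne_zero _)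

theorem hasSum_sin_mul_div_mul_pow {r : ℝ} (hr : |r| < 1) (x : ℝ) :
    HasSum (fun n : ℕ => Real.sin (n * x) / n * r ^ n)
      (-log (1 - r * exp (x * I))).im := by
  have hz : ‖(r : ℂ) * exp (x * I)‖ < 1 := by simpa [norm_exp_ofReal_mul_I] using hr
  convert hasSum_im (hasSum_taylorSeries_neg_log hz) using 2 with n
  rw [mul_pow, ← exp_nat_mul, ← mul_assoc, ← ofReal_pow, ← ofReal_natCast, ← ofReal_mul,
    mul_div_right_comm, ← ofReal_div, im_ofReal_mul, exp_ofReal_mul_I_im]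
  ring

end Complex

namespace Real

theorem tendsto_sum_range_sin_mul_div {x : ℝ} (hx0 : 0 < x) (hx2 : x < 2 * π) :
    Tendsto (fun n => ∑ i ∈ range n, sin (i * x) / i) atTop (𝓝 ((π - x) / 2)) := by
  have hs : 0 < sin (x / 2) := sin_pos_of_pos_of_lt_pi (by linarith) (by linarith)
  obtain ⟨l, hl⟩ := cauchySeq_tendsto_of_complete (cauchySeq_sum_range_sin_mul_div hs)
  set F : ℝ → ℝ := fun r => (-Complex.log (1 - r * Complex.exp (x * Complex.I))).im
  have hF : ContinuousAt F 1 := by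
    refine Complex.continuous_im.continuousAt.comp (ContinuousAt.neg ?_)
    refine (continuousAt_clog ?_).comp (by fun_prop)
    simpa using Complex.one_sub_exp_mul_I_mem_slitPlane hx0 hx2
  have hF1 : F 1 = (π - x) / 2 := by
    simp only [F, Complex.ofReal_one, one_mul, Complex.neg_im, Complex.log_im,
      Complex.arg_one_sub_exp_mul_I hx0 hx2]
    ring
  have habel : ∀ᶠ r in 𝓝[<] 1, ∑' n : ℕ, sin (n * x) / n * r ^ n = F r := by
    filter_upwards [Ioo_mem_nhdsLT (show (0 : ℝ) < 1 by norm_num)] with r hr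
    exact (Complex.hasSum_sin_mul_div_mul_pow (abs_lt.mpr ⟨by linarith [hr.1], hr.2⟩) x).tsum_eq
  have hlim := ((tendsto_tsum_powerSeries_nhdsWithin_lt hl).congr' habel)
  rwa [tendsto_nhds_unique hlim (hF1 ▸ hF.tendsto.mono_left nhdsWithin_le_nhds)] at hl

theorem sin_mul_sin_mul_sin (a b c : ℝ) :
    sin a * sin b * sin c =
      (sin (a + b - c) + sin (b + c - a) + sin (c + a - b) - sin (a + b + c)) / 4 := by
  simp only [sin_add, sin_sub, cos_add]
  ring

end Real

theorem sum_sin_sin_sin_div_eq_pi_div_four_general (α β θ : ℝ) (hβα : β ≤ α)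
    (h1 : α - β < θ) (h2 : θ < α + β) (h3 : θ < 2 * π - α - β) :
    Filter.Tendsto
      (fun N : ℕ => ∑ m ∈ Finset.Icc 1 N,
        Real.sin (m * α) * Real.sin (m * β) * Real.sin (m * θ) / m)
      Filter.atTop (nhds (π / 4)) := by
  have t1 := Real.tendsto_sum_range_sin_mul_div (x := α + β - θ) (by linarith) (by linarith)
  have t2 := Real.tendsto_sum_range_sin_mul_div (x := β + θ - α) (by linarith) (by linarith)
  have t3 := Real.tendsto_sum_range_sin_mul_div (x := θ + α - β) (by linarith) (by linarith)
  have t4 := Real.tendsto_sum_range_sin_mul_div (x := α + β + θ) (by linarith) (by linarith)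
  have hlim := ((((t1.add t2).add t3).sub t4).div_const 4).comp (tendsto_add_atTop_nat 1)
  rw [show ((π - (α + β - θ)) / 2 + (π - (β + θ - α)) / 2 + (π - (θ + α - β)) / 2
      - (π - (α + β + θ)) / 2) / 4 = π / 4 by ring] at hlim
  refine hlim.congr fun N => ?_
  simp only [Function.comp_apply, ← sum_add_distrib, ← sum_sub_distrib, sum_div]
  rw [sum_Icc_one_eq_sum_range_succ (by simp)]
  refine sum_congr rfl fun m _ => ?_
  rw [Real.sin_mul_sin_mul_sin]
  ring_nf

/-- On the support interval `α - β < θ < α + β` (and `θ < 2π - α - β`), the series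
`∑_{m ≥ 1} sin (m α) sin (m β) sin (m θ) / m` converges to `π / 4`. -/
theorem sum_sin_sin_sin_div_eq_pi_div_four (α β θ : ℝ) (hβ0 : 0 < β) (hβα : β ≤ α)
    (hαπ : α < π) (h1 : α - β < θ) (h2 : θ < α + β) (h3 : θ < 2 * π - α - β) :
    Filter.Tendsto
      (fun N : ℕ => ∑ m ∈ Finset.Icc 1 N,
        Real.sin (m * α) * Real.sin (m * β) * Real.sin (m * θ) / m)
      Filter.atTop (nhds (π / 4)) :=
  sum_sin_sin_sin_div_eq_pi_div_four_general α β θ hβα h1 h2 h3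
end

section
/- Let a, b ∈ SU(2) with 0 < |a₁₁| < 1 and 0 < |b₁₁| < 1, and set r(a) = |a₁₁|, r(b) = |b₁₁|, c₀ = r(a)²r(b)² + (1 − r(a)²)(1 − r(b)²), c₁ = 2 r(a) r(b) √((1 − r(a)²)(1 − r(b)²)). Let λ̂_a be the probability measure on SU(2) obtained as the pushforward of the uniform probability measure on [0,2π] × [0,2π] under (φ, ψ) ↦ k(φ)·a·k(ψ), and similarly λ̂_b. Then for every continuous function F : ℝ → ℝ, ∫ F(|g₁₁|) d(λ̂_a ∗ λ̂_b)(g) = ∫_{√(c₀−c₁)}^{√(c₀+c₁)} F(u) · (2u) / (π √(c₁² − (u² − c₀)²)) du. In particular the distribution of |g₁₁| under λ̂_a ∗ λ̂_b is absolutely continuous with the stated density. -/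
open scoped Real
open Matrix MeasureTheory

noncomputable section

/-- `SU2` is the special unitary group of `2 × 2` complex matrices. -/
abbrev SU2 : Type := ↥(Matrix.specialUnitaryGroup (Fin 2) ℂ)

instance : Group SU2 :=
  { (inferInstance : Monoid SU2) with
    inv := fun A => ⟨star A.1,
      Submonoid.mem_inf.mpr
        ⟨Unitary.star_mem (Submonoid.mem_inf.mp A.2).1,
         by
          have h : A.1.det = 1 := (Submonoid.mem_inf.mp A.2).2
          simp only [MonoidHom.mem_mker, Matrix.coe_detMonoidHom]
          rw [Matrix.star_eq_conjTranspose, Matrix.det_conjTranspose, h, star_one]⟩⟩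
    inv_mul_cancel := fun A => Subtype.ext ((Submonoid.mem_inf.mp A.2).1.1 : star A.1 * A.1 = 1) }

instance : IsTopologicalGroup SU2 where
  continuous_mul := Continuous.subtype_mk
    ((continuous_subtype_val.comp continuous_fst).mul
      (continuous_subtype_val.comp continuous_snd)) _
  continuous_inv := Continuous.subtype_mk (continuous_star.comp continuous_subtype_val) _

attribute [local instance] Matrix.normedAddCommGroup Matrix.normedSpace

instance : CompactSpace SU2 := by
  refine isCompact_iff_compactSpace.mp ?_
  have hclosed :
      IsClosed ((Matrix.specialUnitaryGroup (Fin 2) ℂ : Set (Matrix (Fin 2) (Fin 2) ℂ))) := by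
    have : (Matrix.specialUnitaryGroup (Fin 2) ℂ : Set (Matrix (Fin 2) (Fin 2) ℂ))
        = {A | star A * A = 1} ∩ {A | A * star A = 1} ∩ {A | A.det = 1} := by
      ext A
      simp only [Set.mem_inter_iff, Set.mem_setOf_eq, SetLike.mem_coe,
        Matrix.mem_specialUnitaryGroup_iff]
      constructor
      · rintro ⟨⟨h1, h2⟩, h3⟩; exact ⟨⟨h1, h2⟩, h3⟩
      · rintro ⟨⟨h1, h2⟩, h3⟩; exact ⟨⟨h1, h2⟩, h3⟩
    rw [this]
    refine (IsClosed.inter (IsClosed.inter ?_ ?_) ?_)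
    · exact isClosed_eq (continuous_star.mul continuous_id) continuous_const
    · exact isClosed_eq (continuous_id.mul continuous_star) continuous_const
    · exact isClosed_eq (continuous_id.matrix_det) continuous_const
  have hbdd :
      Bornology.IsBounded
        ((Matrix.specialUnitaryGroup (Fin 2) ℂ : Set (Matrix (Fin 2) (Fin 2) ℂ))) := by
    refine Bornology.IsBounded.subset
      (Metric.isBounded_closedBall (x := (0 : Matrix (Fin 2) (Fin 2) ℂ)) (r := 1)) ?_
    intro A hA
    rw [Metric.mem_closedBall, dist_zero_right]
    exact (Matrix.norm_le_iff zero_le_one).mpr fun i j =>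
      entry_norm_bound_of_unitary (Matrix.mem_specialUnitaryGroup_iff.mp hA).1 i j
  exact Metric.isCompact_of_isClosed_isBounded hclosed hbdd

instance : MeasurableSpace SU2 := borel SU2
instance : BorelSpace SU2 := ⟨rfl⟩

/-- The diagonal matrix `diag (e^{iγ}, e^{-iγ})`. -/
def dmat (γ : ℝ) : Matrix (Fin 2) (Fin 2) ℂ :=
  !![Complex.exp (γ * Complex.I), 0; 0, Complex.exp (-γ * Complex.I)]

lemma dmat_mem (γ : ℝ) : dmat γ ∈ Matrix.specialUnitaryGroup (Fin 2) ℂ := by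
  have hdet : (dmat γ).det = 1 := by
    simp [dmat, Matrix.det_fin_two_of, ← Complex.exp_add]
  refine Submonoid.mem_inf.mpr ⟨?_, ?_⟩
  · constructor
    · ext i j
      fin_cases i <;> fin_cases j <;>
        simp [dmat, Matrix.mul_apply, Fin.sum_univ_two, Matrix.star_eq_conjTranspose,
          Matrix.conjTranspose_apply, ← Complex.exp_conj, ← Complex.exp_add,
          Complex.ext_iff, Complex.exp_re, Complex.exp_im]
    · ext i j
      fin_cases i <;> fin_cases j <;>
        simp [dmat, Matrix.mul_apply, Fin.sum_univ_two, Matrix.star_eq_conjTranspose,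
          Matrix.conjTranspose_apply, ← Complex.exp_conj, ← Complex.exp_add,
          Complex.ext_iff, Complex.exp_re, Complex.exp_im]
  · simpa [MonoidHom.mem_mker] using hdet

/-- The element `d(γ) = diag (e^{iγ}, e^{-iγ})` of `SU(2)`. -/
def dSU (γ : ℝ) : SU2 := ⟨dmat γ, dmat_mem γ⟩

/-- The normalized invariant measure on the spherical class `O_a = K a K ⊆ SU(2)`:
the pushforward of the uniform probability measure on `[0, 2π] × [0, 2π]` under
`(φ, ψ) ↦ k(φ) · a · k(ψ)`. -/
def sphClassMeasure (a : SU2) : Measure SU2 :=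
  Measure.map (fun p : ℝ × ℝ => dSU p.1 * a * dSU p.2)
    ((ENNReal.ofReal (4 * π ^ 2))⁻¹ •
      ((volume.restrict (Set.Icc (0 : ℝ) (2 * π))).prod
        (volume.restrict (Set.Icc (0 : ℝ) (2 * π)))))

/-!
Write the two factors as `k(φ₁) a k(ψ₁)` and `k(φ₂) b k(ψ₂)`. The outer phases `φ₁, ψ₂` drop out
of `|g₁₁|`, which becomes `|a₁₁ b₁₁ e^{2iδ} + a₁₂ b₂₁|` with `δ = ψ₁ + φ₂`; by unitarity its square
is `c₀ + c₁ cos (2δ + α)` for a fixed phase `α`. Since `δ` is again uniform modulo `2π`, the integral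
is `π⁻¹ ∫₀^π F (√(c₀ + c₁ cos θ)) dθ`, and the substitution `u = √(c₀ + c₁ cos θ)` produces the
density.
-/

open Set Function ProbabilityTheory ComplexConjugate

lemma Matrix.sum_norm_sq_row_eq_one {n 𝕜 : Type*} [Fintype n] [DecidableEq n] [RCLike 𝕜]
    {U : Matrix n n 𝕜} (hU : U ∈ unitaryGroup n 𝕜) (i : n) : ∑ j, ‖U i j‖ ^ 2 = 1 := by
  have h := congr_arg (fun M : Matrix n n 𝕜 => M i i) (Unitary.mul_star_self_of_mem hU)
  simp only [mul_apply, star_apply, ← starRingEnd_apply, RCLike.mul_conj, one_apply_eq] at h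
  exact_mod_cast h

lemma Matrix.sum_norm_sq_col_eq_one {n 𝕜 : Type*} [Fintype n] [DecidableEq n] [RCLike 𝕜]
    {U : Matrix n n 𝕜} (hU : U ∈ unitaryGroup n 𝕜) (j : n) : ∑ i, ‖U i j‖ ^ 2 = 1 := by
  have h := congr_arg (fun M : Matrix n n 𝕜 => M j j) (Unitary.star_mul_self_of_mem hU)
  simp only [mul_apply, star_apply, ← starRingEnd_apply, RCLike.conj_mul, one_apply_eq] at h
  exact_mod_cast h

lemma Complex.norm_mul_exp_add_sq (z w : ℂ) (θ : ℝ) :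
    ‖z * exp (θ * I) + w‖ ^ 2
      = ‖z‖ ^ 2 + ‖w‖ ^ 2 + 2 * (‖z‖ * ‖w‖) * Real.cos (θ + arg (z * conj w)) := by
  have hre : (z * exp (θ * I) * conj w).re = ‖z‖ * ‖w‖ * Real.cos (θ + arg (z * conj w)) := by
    conv_lhs => rw [mul_right_comm, ← norm_mul_exp_arg_mul_I (z * conj w), mul_assoc,
      ← exp_add, ← add_mul, ← ofReal_add, re_ofReal_mul, exp_ofReal_mul_I_re]
    rw [norm_mul, norm_conj, add_comm θ]
  rw [← normSq_eq_norm_sq, normSq_add, hre, normSq_mul, normSq_eq_norm_sq, normSq_eq_norm_sq,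
    normSq_eq_norm_sq, norm_exp_ofReal_mul_I]
  ring

lemma MeasureTheory.Measure.mconv_map_map {M α β : Type*} [Monoid M] [MeasurableSpace M]
    [MeasurableMul₂ M] [MeasurableSpace α] [MeasurableSpace β] {f : α → M} {g : β → M}
    (hf : Measurable f) (hg : Measurable g) (μ : Measure α) (ν : Measure β)
    [SFinite μ] [SFinite ν] :
    (μ.map f).mconv (ν.map g) = (μ.prod ν).map (fun q => f q.1 * g q.2) := by
  rw [Measure.mconv, Measure.map_prod_map μ ν hf hg,
    Measure.map_map measurable_mul (hf.prodMap hg)]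
  rfl

lemma MeasureTheory.measurePreserving_snd_fst_prod_prod {α β γ δ : Type*} [MeasurableSpace α]
    [MeasurableSpace β] [MeasurableSpace γ] [MeasurableSpace δ]
    (μ₁ : Measure α) (μ₂ : Measure β) (ν₁ : Measure γ) (ν₂ : Measure δ)
    [IsProbabilityMeasure μ₁] [SFinite μ₂] [SFinite ν₁] [IsProbabilityMeasure ν₂] :
    MeasurePreserving (fun q : (α × β) × (γ × δ) => (q.1.2, q.2.1))
      ((μ₁.prod μ₂).prod (ν₁.prod ν₂)) (μ₂.prod ν₁) :=
  measurePreserving_snd.prod measurePreserving_fst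

section UniformOnPeriod

variable {E : Type*} [NormedAddCommGroup E] [NormedSpace ℝ E] {g : ℝ → E} {T : ℝ}

lemma isProbabilityMeasure_cond_Icc (hT : 0 < T) : IsProbabilityMeasure (volume[|Icc 0 T]) :=
  cond_isProbabilityMeasure_of_finite (by simp [hT]) (by simp)

lemma integral_cond_Icc (hT : 0 < T) (g : ℝ → E) :
    ∫ t, g t ∂volume[|Icc 0 T] = T⁻¹ • ∫ t in 0..T, g t := by
  unfold ProbabilityTheory.cond
  rw [integral_smul_measure, Real.volume_Icc, sub_zero, ENNReal.toReal_inv,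
    ENNReal.toReal_ofReal hT.le, intervalIntegral.integral_of_le hT.le,
    integral_Icc_eq_integral_Ioc]

namespace Function.Periodic

lemma integral_cond_Icc_comp_add (hg : Periodic g T) (hT : 0 < T) (s : ℝ) :
    ∫ t, g (s + t) ∂volume[|Icc 0 T] = ∫ t, g t ∂volume[|Icc 0 T] := by
  rw [integral_cond_Icc hT, integral_cond_Icc hT, intervalIntegral.integral_comp_add_left,
    add_zero, hg.intervalIntegral_add_eq s 0, zero_add]

lemma integral_prod_cond_Icc_comp_add [CompleteSpace E] (hg : Periodic g T) (hc : Continuous g)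
    (hT : 0 < T) :
    ∫ p, g (p.1 + p.2) ∂((volume[|Icc 0 T]).prod (volume[|Icc 0 T]))
      = ∫ t, g t ∂volume[|Icc 0 T] := by
  have := isProbabilityMeasure_cond_Icc hT
  obtain ⟨C, hC⟩ := (hg.isBounded_of_continuous hT.ne' hc).exists_norm_le
  have hint : Integrable (fun p : ℝ × ℝ => g (p.1 + p.2))
      ((volume[|Icc 0 T]).prod (volume[|Icc 0 T])) :=
    Integrable.of_bound (by fun_prop : Continuous fun p : ℝ × ℝ => g (p.1 + p.2)).aestronglyMeasurable
      C (ae_of_all _ fun p => hC _ (mem_range_self _))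
  rw [integral_prod _ hint]
  simp_rw [hg.integral_cond_Icc_comp_add hT]
  rw [integral_const, probReal_univ, one_smul]

lemma intervalIntegral_comp_nat_mul_add (hg : Periodic g T) (hc : Continuous g) {n : ℕ}
    (hn : n ≠ 0) (α : ℝ) :
    ∫ x in 0..T, g (n * x + α) = ∫ x in 0..T, g x := by
  have hn' : (n : ℝ) ≠ 0 := Nat.cast_ne_zero.mpr hn
  rw [intervalIntegral.integral_comp_mul_add _ hn', mul_zero, zero_add, add_comm,
    show (n : ℝ) * T = (n : ℤ) • T by simp,
    hg.intervalIntegral_add_zsmul_eq n α fun _ _ => hc.intervalIntegrable _ _,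
    hg.intervalIntegral_add_eq α 0, zero_add, ← Int.cast_smul_eq_zsmul ℝ, smul_smul]
  simp [hn']

lemma intervalIntegral_eq_two_smul_of_even (hg : Periodic g T) (hc : Continuous g)
    (heven : ∀ x, g (-x) = g x) :
    ∫ x in 0..T, g x = (2 : ℝ) • ∫ x in 0..T / 2, g x := by
  have hreflect : ∫ x in T / 2..T, g x = ∫ x in 0..T / 2, g x := calc
    ∫ x in T / 2..T, g x = ∫ x in 0..T / 2, g (T - x) := by
      rw [intervalIntegral.integral_comp_sub_left, sub_zero, sub_half]
    _ = ∫ x in 0..T / 2, g x := by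
      congr 1 with x
      rw [sub_eq_neg_add, hg, heven]
  rw [← intervalIntegral.integral_add_adjacent_intervals (hc.intervalIntegrable 0 (T / 2))
    (hc.intervalIntegrable _ _), hreflect, two_smul]

end Function.Periodic

end UniformOnPeriod

section ArcsineSubstitution

variable {c₀ c₁ : ℝ}

lemma strictAntiOn_sqrt_add_mul_cos (h₁ : 0 < c₁) (h : c₁ ≤ c₀) :
    StrictAntiOn (fun θ => √(c₀ + c₁ * Real.cos θ)) (Icc 0 π) := by
  intro x hx y hy hxy
  have hcos := Real.strictAntiOn_cos hx hy hxy
  exact Real.sqrt_lt_sqrt (by nlinarith [Real.neg_one_le_cos y]) (by nlinarith)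

lemma image_sqrt_add_mul_cos_Ioo (h₁ : 0 < c₁) (h : c₁ ≤ c₀) :
    (fun θ => √(c₀ + c₁ * Real.cos θ)) '' Ioo 0 π = Ioo √(c₀ - c₁) √(c₀ + c₁) := by
  rw [ContinuousOn.image_Ioo_of_strictAntiOn Real.pi_pos.le (by fun_prop)
    (strictAntiOn_sqrt_add_mul_cos h₁ h)]
  simp [sub_eq_add_neg]

lemma abs_deriv_sqrt_add_mul_cos_smul_density (h₁ : 0 < c₁) (F : ℝ → ℝ) {θ : ℝ}
    (hθ : θ ∈ Ioo 0 π) (hpos : 0 < c₀ + c₁ * Real.cos θ) :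
    |-(c₁ * Real.sin θ) / (2 * √(c₀ + c₁ * Real.cos θ))|
        • (F √(c₀ + c₁ * Real.cos θ) * (2 * √(c₀ + c₁ * Real.cos θ))
          / (π * √(c₁ ^ 2 - (√(c₀ + c₁ * Real.cos θ) ^ 2 - c₀) ^ 2)))
      = F √(c₀ + c₁ * Real.cos θ) / π := by
  have hsin : 0 < Real.sin θ := Real.sin_pos_of_pos_of_lt_pi hθ.1 hθ.2
  have hu : 0 < √(c₀ + c₁ * Real.cos θ) := Real.sqrt_pos.mpr hpos
  have hden : √(c₁ ^ 2 - (√(c₀ + c₁ * Real.cos θ) ^ 2 - c₀) ^ 2) = c₁ * Real.sin θ := by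
    rw [Real.sq_sqrt hpos.le, ← Real.sqrt_sq (by positivity : 0 ≤ c₁ * Real.sin θ)]
    congr 1
    nlinarith [Real.sin_sq_add_cos_sq θ]
  rw [smul_eq_mul, hden, abs_div, abs_neg, abs_of_pos (by positivity), abs_of_pos (by positivity)]
  field_simp

lemma intervalIntegral_arcsine_density_eq (h₁ : 0 < c₁) (h : c₁ ≤ c₀) (F : ℝ → ℝ) :
    ∫ u in √(c₀ - c₁)..√(c₀ + c₁), F u * (2 * u) / (π * √(c₁ ^ 2 - (u ^ 2 - c₀) ^ 2))
      = (∫ θ in 0..π, F √(c₀ + c₁ * Real.cos θ)) / π := by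
  have hpos : ∀ θ ∈ Ioo 0 π, 0 < c₀ + c₁ * Real.cos θ := fun θ hθ => by
    have := Real.strictAntiOn_cos (Ioo_subset_Icc_self hθ) ⟨Real.pi_pos.le, le_rfl⟩ hθ.2
    rw [Real.cos_pi] at this
    nlinarith
  have hderiv : ∀ θ ∈ Ioo 0 π, HasDerivWithinAt (fun θ => √(c₀ + c₁ * Real.cos θ))
      (-(c₁ * Real.sin θ) / (2 * √(c₀ + c₁ * Real.cos θ))) (Ioo 0 π) θ := fun θ hθ => by
    simpa using (((Real.hasDerivAt_cos θ).const_mul c₁).const_add c₀).sqrt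
      (hpos θ hθ).ne' |>.hasDerivWithinAt
  rw [intervalIntegral.integral_of_le (Real.sqrt_le_sqrt (by linarith)),
    integral_Ioc_eq_integral_Ioo, ← image_sqrt_add_mul_cos_Ioo h₁ h,
    integral_image_eq_integral_abs_deriv_smul measurableSet_Ioo hderiv
      ((strictAntiOn_sqrt_add_mul_cos h₁ h).injOn.mono Ioo_subset_Icc_self),
    setIntegral_congr_fun measurableSet_Ioo fun θ hθ =>
      abs_deriv_sqrt_add_mul_cos_smul_density h₁ F hθ (hpos θ hθ),
    intervalIntegral.integral_of_le Real.pi_pos.le, integral_Ioc_eq_integral_Ioo, integral_div]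

end ArcsineSubstitution

instance : SecondCountableTopology (Matrix (Fin 2) (Fin 2) ℂ) :=
  inferInstanceAs (SecondCountableTopology (Fin 2 → Fin 2 → ℂ))

instance : SecondCountableTopology SU2 :=
  TopologicalSpace.Subtype.secondCountableTopology _

instance : IsProbabilityMeasure (volume[|Icc (0 : ℝ) (2 * π)]) :=
  isProbabilityMeasure_cond_Icc Real.two_pi_pos

namespace SU2

@[fun_prop]
lemma continuous_apply (i j : Fin 2) : Continuous fun g : SU2 => g.1 i j :=
  (_root_.continuous_apply j).comp ((_root_.continuous_apply i).comp continuous_subtype_val)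

lemma mem_unitaryGroup (a : SU2) : a.1 ∈ unitaryGroup (Fin 2) ℂ :=
  (mem_specialUnitaryGroup_iff.mp a.2).1

lemma norm_sq_entry_zero_one (a : SU2) : ‖a.1 0 1‖ ^ 2 = 1 - ‖a.1 0 0‖ ^ 2 := by
  have h := Matrix.sum_norm_sq_row_eq_one a.mem_unitaryGroup 0
  rw [Fin.sum_univ_two] at h
  linarith

lemma norm_sq_entry_one_zero (a : SU2) : ‖a.1 1 0‖ ^ 2 = 1 - ‖a.1 0 0‖ ^ 2 := by
  have h := Matrix.sum_norm_sq_col_eq_one a.mem_unitaryGroup 0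
  rw [Fin.sum_univ_two] at h
  linarith

lemma norm_mul_exp_add (a b : SU2) {c₀ c₁ : ℝ}
    (hc₀ : c₀ = ‖a.1 0 0‖ ^ 2 * ‖b.1 0 0‖ ^ 2 + (1 - ‖a.1 0 0‖ ^ 2) * (1 - ‖b.1 0 0‖ ^ 2))
    (hc₁ : c₁ = 2 * ‖a.1 0 0‖ * ‖b.1 0 0‖ * √((1 - ‖a.1 0 0‖ ^ 2) * (1 - ‖b.1 0 0‖ ^ 2)))
    (θ : ℝ) :
    ‖a.1 0 0 * b.1 0 0 * Complex.exp (θ * Complex.I) + a.1 0 1 * b.1 1 0‖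
      = √(c₀ + c₁ * Real.cos (θ + Complex.arg (a.1 0 0 * b.1 0 0 * conj (a.1 0 1 * b.1 1 0)))) := by
  have hprod : ‖a.1 0 1‖ * ‖b.1 1 0‖ = √((1 - ‖a.1 0 0‖ ^ 2) * (1 - ‖b.1 0 0‖ ^ 2)) := by
    rw [← a.norm_sq_entry_zero_one, ← b.norm_sq_entry_one_zero, ← mul_pow,
      Real.sqrt_sq (by positivity)]
  rw [← Real.sqrt_sq (norm_nonneg _), Complex.norm_mul_exp_add_sq, norm_mul, norm_mul, mul_pow,
    mul_pow, a.norm_sq_entry_zero_one, b.norm_sq_entry_one_zero, hc₀, hc₁, ← hprod]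
  ring_nf

end SU2

@[fun_prop]
lemma continuous_dSU : Continuous dSU :=
  Continuous.subtype_mk (continuous_matrix fun i j => by fin_cases i <;> fin_cases j <;>
    simp only [dmat] <;> fun_prop) _

lemma norm_dSU_mul_mul_dSU_mul_apply_zero_zero (a b : SU2) (φ₁ ψ₁ φ₂ ψ₂ : ℝ) :
    ‖(dSU φ₁ * a * dSU ψ₁ * (dSU φ₂ * b * dSU ψ₂)).1 0 0‖
      = ‖a.1 0 0 * b.1 0 0 * Complex.exp (↑(2 * (ψ₁ + φ₂)) * Complex.I)
          + a.1 0 1 * b.1 1 0‖ := by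
  have h : (dSU φ₁ * a * dSU ψ₁ * (dSU φ₂ * b * dSU ψ₂)).1 0 0
      = Complex.exp (↑(φ₁ + ψ₂ - (ψ₁ + φ₂)) * Complex.I)
        * (a.1 0 0 * b.1 0 0 * Complex.exp (↑(2 * (ψ₁ + φ₂)) * Complex.I)
          + a.1 0 1 * b.1 1 0) := by
    simp only [Submonoid.coe_mul, dSU, dmat, mul_apply, Fin.sum_univ_two, of_apply, cons_val',
      cons_val_zero, cons_val_one, empty_val', cons_val_fin_one, zero_mul, mul_zero, add_zero,
      zero_add]
    push_cast
    simp only [two_mul, add_mul, sub_mul, neg_mul, Complex.exp_add, Complex.exp_sub,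
      Complex.exp_neg]
    field_simp
  rw [h, norm_mul, Complex.norm_exp_ofReal_mul_I, one_mul]

lemma sphClassMeasure_eq_map (a : SU2) :
    sphClassMeasure a = ((volume[|Icc 0 (2 * π)]).prod (volume[|Icc 0 (2 * π)])).map
      (fun p : ℝ × ℝ => dSU p.1 * a * dSU p.2) := by
  have h4 : ENNReal.ofReal (4 * π ^ 2) = ENNReal.ofReal (2 * π) * ENNReal.ofReal (2 * π) := by
    rw [← ENNReal.ofReal_mul (by positivity)]
    ring_nf
  unfold sphClassMeasure ProbabilityTheory.cond
  rw [Measure.prod_smul_left, Measure.prod_smul_right, smul_smul, Real.volume_Icc, sub_zero, h4,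
    ENNReal.mul_inv (by simp [Real.pi_pos]) (by simp [Real.pi_pos])]

lemma integral_mconv_sphClassMeasure (a b : SU2) {f : SU2 → ℝ} (hf : Continuous f) :
    ∫ g, f g ∂((sphClassMeasure a).mconv (sphClassMeasure b))
      = ∫ q, f (dSU q.1.1 * a * dSU q.1.2 * (dSU q.2.1 * b * dSU q.2.2))
          ∂(((volume[|Icc 0 (2 * π)]).prod (volume[|Icc 0 (2 * π)])).prod
            ((volume[|Icc 0 (2 * π)]).prod (volume[|Icc 0 (2 * π)]))) := by
  rw [sphClassMeasure_eq_map, sphClassMeasure_eq_map,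
    Measure.mconv_map_map (by fun_prop) (by fun_prop),
    integral_map (by fun_prop) hf.aestronglyMeasurable]

/-- Product formula for spherical classes in `SU(2)`: the distribution of `|g₁₁|` under the
convolution of two normalized spherical measures has the stated density. -/
theorem sphClass_conv_density (a b : SU2)
    (ha0 : 0 < ‖a.1 0 0‖) (ha1 : ‖a.1 0 0‖ < 1)
    (hb0 : 0 < ‖b.1 0 0‖) (hb1 : ‖b.1 0 0‖ < 1)
    (c₀ c₁ : ℝ)
    (hc₀ : c₀ = ‖a.1 0 0‖ ^ 2 * ‖b.1 0 0‖ ^ 2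
        + (1 - ‖a.1 0 0‖ ^ 2) * (1 - ‖b.1 0 0‖ ^ 2))
    (hc₁ : c₁ = 2 * ‖a.1 0 0‖ * ‖b.1 0 0‖
        * Real.sqrt ((1 - ‖a.1 0 0‖ ^ 2) * (1 - ‖b.1 0 0‖ ^ 2)))
    (F : ℝ → ℝ) (hF : Continuous F) :
    ∫ g, F (‖(g : Matrix (Fin 2) (Fin 2) ℂ) 0 0‖)
        ∂((sphClassMeasure a).mconv (sphClassMeasure b))
      = ∫ u in Real.sqrt (c₀ - c₁)..Real.sqrt (c₀ + c₁),
          F u * (2 * u) / (π * Real.sqrt (c₁ ^ 2 - (u ^ 2 - c₀) ^ 2)) := by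
  have hrad : 0 < (1 - ‖a.1 0 0‖ ^ 2) * (1 - ‖b.1 0 0‖ ^ 2) :=
    mul_pos (by nlinarith) (by nlinarith)
  obtain ⟨hc₁_pos, hc₁_le⟩ : 0 < c₁ ∧ c₁ ≤ c₀ := by
    subst hc₀ hc₁
    exact ⟨by positivity, by nlinarith [Real.sq_sqrt hrad.le, sq_nonneg (‖a.1 0 0‖ * ‖b.1 0 0‖
      - √((1 - ‖a.1 0 0‖ ^ 2) * (1 - ‖b.1 0 0‖ ^ 2)))]⟩
  set α := Complex.arg (a.1 0 0 * b.1 0 0 * conj (a.1 0 1 * b.1 1 0))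
  set H : ℝ → ℝ := fun θ => F √(c₀ + c₁ * Real.cos θ) with hH
  have hH_cont : Continuous H := by fun_prop
  have hH_per : Periodic H (2 * π) := fun θ => by simp only [hH, Real.cos_add_two_pi]
  have hG_per : Periodic (fun δ => H (2 * δ + α)) (2 * π) := fun δ => by
    dsimp only
    rw [show 2 * (δ + 2 * π) + α = 2 * δ + α + 2 * π + 2 * π by ring, hH_per, hH_per]
  set U := volume[|Icc (0 : ℝ) (2 * π)]
  calc ∫ g, F ‖(g : Matrix (Fin 2) (Fin 2) ℂ) 0 0‖ ∂((sphClassMeasure a).mconv (sphClassMeasure b))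
      = ∫ q, H (2 * (q.1.2 + q.2.1) + α) ∂((U.prod U).prod (U.prod U)) := by
        rw [integral_mconv_sphClassMeasure a b (by fun_prop)]
        congr 1 with q
        rw [norm_dSU_mul_mul_dSU_mul_apply_zero_zero, SU2.norm_mul_exp_add a b hc₀ hc₁]
    _ = ∫ p, H (2 * (p.1 + p.2) + α) ∂(U.prod U) := by
        conv_rhs => rw [← (measurePreserving_snd_fst_prod_prod U U U U).map_eq]
        rw [integral_map (by fun_prop) (by fun_prop)]
    _ = (2 * π)⁻¹ * ∫ δ in 0..2 * π, H (2 * δ + α) := by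
        rw [hG_per.integral_prod_cond_Icc_comp_add (by fun_prop) Real.two_pi_pos,
          integral_cond_Icc Real.two_pi_pos, smul_eq_mul]
    _ = (2 * π)⁻¹ * (2 * ∫ θ in 0..π, H θ) := by
        have h2 := hH_per.intervalIntegral_comp_nat_mul_add hH_cont two_ne_zero α
        push_cast at h2
        rw [h2, hH_per.intervalIntegral_eq_two_smul_of_even hH_cont (by simp [hH]),
          mul_div_cancel_left₀ _ two_ne_zero, smul_eq_mul]
    _ = _ := by
        rw [intervalIntegral_arcsine_density_eq hc₁_pos hc₁_le, hH]
        field_simp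
end
end

section
/- Let a, b ∈ SU(2), set r(a) = |a₁₁|, r(b) = |b₁₁|, c₀ = r(a)²r(b)² + (1 − r(a)²)(1 − r(b)²), and c₁ = 2 r(a) r(b) √((1 − r(a)²)(1 − r(b)²)). Then there exists δ ∈ ℝ such that for all φ ∈ ℝ, |(a·k(φ)·b)₁₁|² = c₀ + c₁ cos(2φ + δ), where k(φ) = diag(e^{iφ}, e^{−iφ}) and (·)₁₁ denotes the (1,1) matrix entry. -/
open Matrix

noncomputable section

/-- The diagonal matrix `k(φ) = diag (e^{iφ}, e^{-iφ})`. -/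
def kmat (φ : ℝ) : Matrix (Fin 2) (Fin 2) ℂ :=
  !![Complex.exp (φ * Complex.I), 0; 0, Complex.exp (-φ * Complex.I)]

/-!
Write `z = a₁₁ b₁₁` and `w = a₁₂ b₂₁`. Since `k(φ)` is diagonal,
`(a k(φ) b)₁₁ = z e^{iφ} + w e^{-iφ}`, whose squared modulus is
`|z|² + |w|² + 2 Re (z w̄ e^{2iφ}) = |z|² + |w|² + 2 |z w̄| cos (2φ + arg (z w̄))`.
Unitarity gives `|a₁₂|² = 1 - |a₁₁|²` and `|b₂₁|² = 1 - |b₁₁|²`, which turns these moduli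
into `c₀` and `c₁`; the phase is `δ = arg (z w̄)`.
-/

section UnitaryEntries

variable {𝕜 n : Type*} [RCLike 𝕜] [Fintype n] [DecidableEq n] {U : Matrix n n 𝕜}

theorem sum_norm_sq_row_of_mem_unitaryGroup (hU : U ∈ unitaryGroup n 𝕜) (i : n) :
    ∑ j, ‖U i j‖ ^ 2 = 1 := by
  have hdiag : (U * star U) i i = ((∑ j, ‖U i j‖ ^ 2 : ℝ) : 𝕜) := by
    simp only [mul_apply, star_apply, ← starRingEnd_apply, RCLike.mul_conj, RCLike.ofReal_sum,
      RCLike.ofReal_pow]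
  rw [Unitary.mul_star_self_of_mem hU, one_apply_eq] at hdiag
  exact_mod_cast hdiag.symm

theorem sum_norm_sq_col_of_mem_unitaryGroup (hU : U ∈ unitaryGroup n 𝕜) (j : n) :
    ∑ i, ‖U i j‖ ^ 2 = 1 := by
  simpa only [star_apply, norm_star] using
    sum_norm_sq_row_of_mem_unitaryGroup (Unitary.star_mem hU) j

end UnitaryEntries

section UnitaryTwo

variable {𝕜 : Type*} [RCLike 𝕜] {U : Matrix (Fin 2) (Fin 2) 𝕜}

theorem norm_sq_apply_zero_one_of_mem_unitaryGroup (hU : U ∈ unitaryGroup (Fin 2) 𝕜) :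
    ‖U 0 1‖ ^ 2 = 1 - ‖U 0 0‖ ^ 2 := by
  have h := sum_norm_sq_row_of_mem_unitaryGroup hU 0
  rw [Fin.sum_univ_two] at h
  linarith

theorem norm_sq_apply_one_zero_of_mem_unitaryGroup (hU : U ∈ unitaryGroup (Fin 2) 𝕜) :
    ‖U 1 0‖ ^ 2 = 1 - ‖U 0 0‖ ^ 2 := by
  have h := sum_norm_sq_col_of_mem_unitaryGroup hU 0
  rw [Fin.sum_univ_two] at h
  linarith

end UnitaryTwo

namespace Complex

open ComplexConjugate

theorem re_mul_exp_ofReal_mul_I (u : ℂ) (θ : ℝ) :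
    (u * exp (θ * I)).re = ‖u‖ * Real.cos (θ + arg u) := by
  rw [mul_re, exp_ofReal_mul_I_re, exp_ofReal_mul_I_im, ← norm_mul_cos_arg u,
    ← norm_mul_sin_arg u, Real.cos_add]
  ring

theorem norm_sq_mul_exp_add_mul_exp_neg (z w : ℂ) (φ : ℝ) :
    ‖z * exp (φ * I) + w * exp (-φ * I)‖ ^ 2
      = ‖z‖ ^ 2 + ‖w‖ ^ 2 + 2 * ‖z * conj w‖ * Real.cos (2 * φ + arg (z * conj w)) := by
  have hcross : z * exp (φ * I) * conj (w * exp (-φ * I))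
      = z * conj w * exp (↑(2 * φ) * I) := by
    rw [map_mul, ← exp_conj]
    push_cast
    simp only [map_mul, map_neg, conj_ofReal, conj_I]
    rw [show (2 * (φ : ℂ)) * I = φ * I + -(φ : ℂ) * -I by ring, exp_add]
    ring
  rw [Complex.sq_norm, normSq_add, hcross, re_mul_exp_ofReal_mul_I, ← Complex.sq_norm,
    ← Complex.sq_norm, norm_mul, norm_mul, norm_exp_ofReal_mul_I, ← ofReal_neg,
    norm_exp_ofReal_mul_I]
  ring

end Complex

theorem mul_kmat_mul_apply_zero_zero (A B : Matrix (Fin 2) (Fin 2) ℂ) (φ : ℝ) :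
    (A * kmat φ * B) 0 0
      = A 0 0 * B 0 0 * Complex.exp (φ * Complex.I)
        + A 0 1 * B 1 0 * Complex.exp (-φ * Complex.I) := by
  simp only [kmat, mul_apply, Fin.sum_univ_two, of_apply, cons_val', cons_val_zero, cons_val_one,
    empty_val', cons_val_fin_one, mul_zero, add_zero, zero_add]
  ring

/-- The squared modulus of the `(1,1)` entry of `a · k(φ) · b` for `a, b ∈ SU(2)` equals
`c₀ + c₁ cos (2φ + δ)` for some phase `δ`. -/
theorem abs_sq_entry_mul_kmat_mul (a b : SU2)
    (c₀ c₁ : ℝ)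
    (hc₀ : c₀ = ‖a.1 0 0‖ ^ 2 * ‖b.1 0 0‖ ^ 2
        + (1 - ‖a.1 0 0‖ ^ 2) * (1 - ‖b.1 0 0‖ ^ 2))
    (hc₁ : c₁ = 2 * ‖a.1 0 0‖ * ‖b.1 0 0‖
        * Real.sqrt ((1 - ‖a.1 0 0‖ ^ 2) * (1 - ‖b.1 0 0‖ ^ 2))) :
    ∃ δ : ℝ, ∀ φ : ℝ,
      ‖(a.1 * kmat φ * b.1) 0 0‖ ^ 2 = c₀ + c₁ * Real.cos (2 * φ + δ) := by
  have ha := norm_sq_apply_zero_one_of_mem_unitaryGroup a.2.1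
  have hb := norm_sq_apply_one_zero_of_mem_unitaryGroup b.2.1
  have hsqrt : Real.sqrt ((1 - ‖a.1 0 0‖ ^ 2) * (1 - ‖b.1 0 0‖ ^ 2)) = ‖a.1 0 1‖ * ‖b.1 1 0‖ := by
    rw [← ha, ← hb, ← mul_pow, Real.sqrt_sq (by positivity)]
  refine ⟨Complex.arg (a.1 0 0 * b.1 0 0 * starRingEnd ℂ (a.1 0 1 * b.1 1 0)), fun φ => ?_⟩
  rw [mul_kmat_mul_apply_zero_zero, Complex.norm_sq_mul_exp_add_mul_exp_neg, hc₀, hc₁, hsqrt,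
    ← ha, ← hb]
  simp only [norm_mul, RCLike.norm_conj, mul_pow]
  ring
end
end

section
/- Let 0 < t₁ ≤ t₂, set c₁ = cosh t₁ cosh t₂ and c₂ = sinh t₁ sinh t₂, and let F : ℝ → ℝ be continuous. Then ∫_0^{2π} F(c₁ + c₂ cos θ) dθ = 2 ∫_{t₂−t₁}^{t₂+t₁} F(cosh r) · sinh r / √(c₂² − (c₁ − cosh r)²) dr. -/
/-!
Both sides equal `∫_{c₁-c₂}^{c₁+c₂} F u / √(c₂² - (c₁ - u)²) du`: on `[0, π]` substitute
`u = c₁ + c₂ cos θ` (so that `c₂ sin θ = √(c₂² - (c₁ - u)²)`), on `[t₂ - t₁, t₂ + t₁]` substitute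
`u = cosh r`, the endpoints matching because `cosh (t₂ ∓ t₁) = c₁ ∓ c₂`. The half-period `[0, π]`
accounts for the factor `2`, as `θ ↦ 2π - θ` maps `[π, 2π]` onto it and preserves `cos θ`.
-/

open scoped Real
open MeasureTheory Set Real

theorem integral_zero_two_pi_comp_cos {f : ℝ → ℝ} (hf : Continuous f) :
    ∫ θ in (0 : ℝ)..2 * π, f (cos θ) = 2 * ∫ θ in (0 : ℝ)..π, f (cos θ) := by
  have hfcos : Continuous fun θ => f (cos θ) := by fun_prop
  have hreflect : ∫ θ in π..2 * π, f (cos θ) = ∫ θ in (0 : ℝ)..π, f (cos θ) := by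
    simpa [cos_sub, show 2 * π - π = π by ring] using
      (intervalIntegral.integral_comp_sub_left (fun θ => f (cos θ)) (a := 0) (b := π) (2 * π)).symm
  rw [← intervalIntegral.integral_add_adjacent_intervals (hfcos.intervalIntegrable 0 π)
    (hfcos.intervalIntegrable π (2 * π)), hreflect]
  ring

theorem integral_Ioo_comp_add_mul_cos (c₁ : ℝ) {c₂ : ℝ} (hc₂ : 0 < c₂) (g : ℝ → ℝ) :
    ∫ θ in Ioo 0 π, g (c₁ + c₂ * cos θ)
      = ∫ u in Ioo (c₁ - c₂) (c₁ + c₂), g u / √(c₂ ^ 2 - (c₁ - u) ^ 2) := by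
  have hanti : StrictAntiOn (fun θ => c₁ + c₂ * cos θ) (Icc 0 π) := fun x hx y hy hxy => by
    simpa using mul_lt_mul_of_pos_left (strictAntiOn_cos hx hy hxy) hc₂
  have himage : (fun θ => c₁ + c₂ * cos θ) '' Ioo 0 π = Ioo (c₁ - c₂) (c₁ + c₂) := by
    rw [ContinuousOn.image_Ioo_of_strictAntiOn pi_pos.le (by fun_prop) hanti]
    simp [sub_eq_add_neg]
  have hderiv : ∀ θ ∈ Ioo 0 π,
      HasDerivWithinAt (fun θ => c₁ + c₂ * cos θ) (c₂ * -sin θ) (Ioo 0 π) θ :=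
    fun θ _ => (((hasDerivAt_cos θ).const_mul c₂).const_add c₁).hasDerivWithinAt
  rw [← himage, integral_image_eq_integral_abs_deriv_smul measurableSet_Ioo hderiv
    (hanti.injOn.mono Ioo_subset_Icc_self)]
  refine setIntegral_congr_fun measurableSet_Ioo fun θ hθ => ?_
  have hsin : 0 < c₂ * sin θ := mul_pos hc₂ (sin_pos_of_pos_of_lt_pi hθ.1 hθ.2)
  have hsqrt : √(c₂ ^ 2 - (c₁ - (c₁ + c₂ * cos θ)) ^ 2) = c₂ * sin θ := by
    rw [← sqrt_sq hsin.le]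
    congr 1
    linear_combination -c₂ ^ 2 * sin_sq_add_cos_sq θ
  rw [hsqrt, mul_neg, abs_neg, abs_of_pos hsin, smul_eq_mul, mul_div_cancel₀ _ hsin.ne']

theorem integral_Ioo_comp_cosh_mul_sinh {a b : ℝ} (ha : 0 ≤ a) (hab : a ≤ b) (g : ℝ → ℝ) :
    ∫ r in Ioo a b, g (cosh r) * sinh r = ∫ u in Ioo (cosh a) (cosh b), g u := by
  have hmono : StrictMonoOn cosh (Icc a b) :=
    cosh_strictMonoOn.mono fun r hr => ha.trans hr.1
  rw [← ContinuousOn.image_Ioo_of_strictMonoOn hab continuous_cosh.continuousOn hmono,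
    integral_image_eq_integral_abs_deriv_smul measurableSet_Ioo
      (fun r _ => (hasDerivAt_cosh r).hasDerivWithinAt) (hmono.injOn.mono Ioo_subset_Icc_self)]
  refine setIntegral_congr_fun measurableSet_Ioo fun r hr => ?_
  rw [abs_of_pos (sinh_pos_iff.2 (ha.trans_lt hr.1)), smul_eq_mul, mul_comm]

/-- The change of variables `cosh r = c₁ + c₂ cos θ` with `c₁ = cosh t₁ cosh t₂` and
`c₂ = sinh t₁ sinh t₂`. -/
theorem integral_cosh_cos_change_of_variables (t₁ t₂ : ℝ) (ht₁ : 0 < t₁) (ht : t₁ ≤ t₂)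
    (c₁ c₂ : ℝ) (hc₁ : c₁ = Real.cosh t₁ * Real.cosh t₂)
    (hc₂ : c₂ = Real.sinh t₁ * Real.sinh t₂)
    (F : ℝ → ℝ) (hF : Continuous F) :
    ∫ θ in (0 : ℝ)..2 * π, F (c₁ + c₂ * Real.cos θ)
      = 2 * ∫ r in t₂ - t₁..t₂ + t₁,
          F (Real.cosh r) * Real.sinh r / Real.sqrt (c₂ ^ 2 - (c₁ - Real.cosh r) ^ 2) := by
  have hc₂pos : 0 < c₂ := hc₂ ▸ mul_pos (sinh_pos_iff.2 ht₁) (sinh_pos_iff.2 (ht₁.trans_le ht))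
  have hcosh_sub : cosh (t₂ - t₁) = c₁ - c₂ := by rw [cosh_sub, hc₁, hc₂]; ring
  have hcosh_add : cosh (t₂ + t₁) = c₁ + c₂ := by rw [cosh_add, hc₁, hc₂]; ring
  rw [integral_zero_two_pi_comp_cos (f := fun x => F (c₁ + c₂ * x)) (by fun_prop),
    intervalIntegral.integral_of_le pi_pos.le, intervalIntegral.integral_of_le (by linarith),
    integral_Ioc_eq_integral_Ioo, integral_Ioc_eq_integral_Ioo,
    integral_Ioo_comp_add_mul_cos c₁ hc₂pos, ← hcosh_sub, ← hcosh_add,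
    ← integral_Ioo_comp_cosh_mul_sinh (by linarith) (by linarith)]
  simp_rw [div_mul_eq_mul_div]
end
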